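/- For every integer p ≥ 3 and every β > β_0 > β*(p), sup_{x ∈ η_p^{−1}((β,∞))} H_{β_0,p}(x) = max{ sup_{x ∈ (m_*(β,p), 1]} H_{β_0,p}(x), 0 }, where η_p^{−1}((β,∞)) = {t ∈ [−1,1] : η_p(t) > β}. -/

import Mathlib

open Real Set Filter

/-- `I(x) = ½[(1+x)log(1+x) + (1−x)log(1−x)]` (with `Real.log 0 = 0`). -/
noncomputable def bahI (x : ℝ) : ℝ :=
  ((1 + x) * Real.log (1 + x) + (1 - x) * Real.log (1 - x)) / 2

/-- `H_{β,p}(x) = β xᵖ − I(x)`. -/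
noncomputable def bahH (β : ℝ) (p : ℕ) (x : ℝ) : ℝ := β * x ^ p - bahI x

/-- `β*(p) = sup {β ≥ 0 : sup_{x∈[−1,1]} H_{β,p}(x) = 0}`. -/
noncomputable def betaStar (p : ℕ) : ℝ :=
  sSup {β : ℝ | 0 ≤ β ∧ sSup (bahH β p '' Set.Icc (-1 : ℝ) 1) = 0}

/-- inverse hyperbolic tangent. -/
noncomputable def arctanh (x : ℝ) : ℝ := Real.log ((1 + x) / (1 - x)) / 2

/-- `η_p(t) = p⁻¹ t^{1−p} arctanh t` for `t ≠ 0`, and `η_p(0) = 0`. -/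
noncomputable def etaFn (p : ℕ) (t : ℝ) : ℝ :=
  if t = 0 then 0 else (p : ℝ)⁻¹ * t ^ (1 - (p : ℤ)) * arctanh t

open Topology

/-!
For `0 < x < 1` one has `H_{β,p}'(x) = p x^{p-1} (β - η_p(x))`, so the sign of `H_{β,p}'` is
read off the superlevel set `{η_p > β}`. Moreover `η_p'(t) = g(t) / (p tᵖ)` with
`g(t) = t / (1 - t²) - (p - 1) artanh t`, and `g` decreases and then increases from `g(0) = 0`,
so `η_p` decreases and then increases on `(0, 1)`. At the maximizer `m` the first- and
second-order conditions read `η_p(m) = β` and `η_p'(m) ≥ 0`; hence `η_p > β` on `(m, 1)`, while a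
point `t ∈ (0, m]` with `η_p(t) > β` lies on the decreasing branch, where `H_β' < 0` on `(0, t)`
gives `H_{β₀}(t) < H_β(t) < H_β(0) = 0`. Negative points reduce to `|t|` (`p` even) or do not
occur (`p` odd), and since `η_p → ∞` at `0⁺`, both `0` and `(m, 1]` lie in the closure of the
superlevel set.
-/

lemma arctanh_eq_artanh {x : ℝ} (hx : x ∈ Icc (-1 : ℝ) 1) : arctanh x = artanh x := by
  rw [artanh_eq_half_log hx, arctanh]
  ring

lemma arctanh_neg (x : ℝ) : arctanh (-x) = -arctanh x := by
  rw [arctanh, arctanh, ← neg_div, ← Real.log_inv, inv_div, sub_neg_eq_add, ← sub_eq_add_neg]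

lemma hasDerivAt_arctanh {x : ℝ} (h0 : -1 < x) (h1 : x < 1) :
    HasDerivAt arctanh (1 / (1 - x ^ 2)) x := by
  have hsub : (1 : ℝ) - x ≠ 0 := by linarith
  have hadd : (1 : ℝ) + x ≠ 0 := by linarith
  have hq : HasDerivAt (fun y : ℝ => (1 + y) / (1 - y)) (2 / (1 - x) ^ 2) x :=
    (((hasDerivAt_id x).const_add 1).div ((hasDerivAt_id x).const_sub 1) hsub).congr_deriv
      (by simp only [id]; ring)
  refine ((hq.log (div_ne_zero hadd hsub)).div_const 2).congr_deriv ?_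
  rw [show (1 : ℝ) - x ^ 2 = (1 + x) * (1 - x) by ring]
  field_simp

lemma half_lt_arctanh {x : ℝ} (h0 : 0 < x) (h1 : x < 1) : x / 2 < arctanh x := by
  have hsub : Real.log (1 - x) ≤ -x := by
    linarith [Real.log_le_sub_one_of_pos (x := 1 - x) (by linarith)]
  have hadd : 0 < Real.log (1 + x) := Real.log_pos (by linarith)
  rw [arctanh, Real.log_div (by linarith) (by linarith)]
  linarith

lemma tendsto_arctanh_nhdsLT_one : Tendsto arctanh (𝓝[<] 1) atTop := by
  have hsub : Tendsto (fun x : ℝ => 1 - x) (𝓝[<] 1) (𝓝[>] 0) := by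
    refine tendsto_nhdsWithin_of_tendsto_nhds_of_eventually_within _ ?_ ?_
    · exact tendsto_nhdsWithin_of_tendsto_nhds
        (by simpa using (tendsto_const_nhds (x := (1 : ℝ))).sub (tendsto_id (x := 𝓝 (1 : ℝ))))
    · filter_upwards [self_mem_nhdsWithin] with x (hx : x < 1)
      exact sub_pos.2 hx
  have hadd : Tendsto (fun x : ℝ => 1 + x) (𝓝[<] 1) (𝓝 2) :=
    tendsto_nhdsWithin_of_tendsto_nhds (by simpa [one_add_one_eq_two] using
      (tendsto_const_nhds (x := (1 : ℝ))).add (tendsto_id (x := 𝓝 (1 : ℝ))))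
  exact (tendsto_log_atTop.comp (hadd.pos_mul_atTop two_pos
    (tendsto_inv_nhdsGT_zero.comp hsub))).atTop_div_const two_pos

lemma hasDerivAt_bahI {x : ℝ} (h0 : -1 < x) (h1 : x < 1) :
    HasDerivAt bahI (arctanh x) x := by
  have hadd := (hasDerivAt_mul_log (by linarith : (1 : ℝ) + x ≠ 0)).comp x
    ((hasDerivAt_id x).const_add 1)
  have hsub := (hasDerivAt_mul_log (by linarith : (1 : ℝ) - x ≠ 0)).comp x
    ((hasDerivAt_id x).const_sub 1)
  refine ((hadd.add hsub).div_const 2).congr_deriv ?_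
  rw [arctanh, Real.log_div (by linarith) (by linarith)]
  ring

lemma continuous_bahI : Continuous bahI :=
  ((continuous_mul_log.comp (continuous_const.add continuous_id)).add
    (continuous_mul_log.comp (continuous_const.sub continuous_id))).div_const 2

lemma continuous_bahH (β : ℝ) (p : ℕ) : Continuous (bahH β p) :=
  (continuous_const.mul (continuous_pow p)).sub continuous_bahI

lemma bahI_neg (x : ℝ) : bahI (-x) = bahI x := by
  rw [bahI, bahI, sub_neg_eq_add, ← sub_eq_add_neg]
  ring

lemma bahH_zero (β : ℝ) {p : ℕ} (hp : p ≠ 0) : bahH β p 0 = 0 := by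
  simp [bahH, bahI, zero_pow hp]

lemma bahH_neg (β : ℝ) {p : ℕ} (hp : Even p) (x : ℝ) : bahH β p (-x) = bahH β p x := by
  rw [bahH, bahH, hp.neg_pow, bahI_neg]

lemma etaFn_zero (p : ℕ) : etaFn p 0 = 0 := if_pos rfl

lemma etaFn_of_pos {p : ℕ} (hp : p ≠ 0) {t : ℝ} (ht : 0 < t) :
    etaFn p t = arctanh t / (p * t ^ (p - 1)) := by
  rw [etaFn, if_neg ht.ne', show 1 - (p : ℤ) = -((p - 1 : ℕ) : ℤ) by omega, zpow_neg,
    zpow_natCast]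
  field_simp

lemma etaFn_pos {p : ℕ} (hp : p ≠ 0) {t : ℝ} (h0 : 0 < t) (h1 : t < 1) : 0 < etaFn p t := by
  rw [etaFn_of_pos hp h0, arctanh_eq_artanh ⟨by linarith, h1.le⟩]
  exact div_pos (artanh_pos ⟨h0, h1⟩) (by positivity)

lemma etaFn_neg {p : ℕ} (hp : Even p) (t : ℝ) : etaFn p (-t) = etaFn p t := by
  have hodd : Odd (1 - (p : ℤ)) := by
    obtain ⟨k, hk⟩ := hp
    exact ⟨-k, by omega⟩
  simp only [etaFn, neg_eq_zero, hodd.neg_zpow, arctanh_neg]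
  split_ifs <;> ring

lemma etaFn_nonpos {p : ℕ} (hp : Odd p) {t : ℝ} (h0 : -1 ≤ t) (h1 : t ≤ 0) : etaFn p t ≤ 0 := by
  have heven : Even (1 - (p : ℤ)) := by
    obtain ⟨k, hk⟩ := hp
    exact ⟨-k, by omega⟩
  rw [etaFn]
  split_ifs
  · exact le_rfl
  · rw [arctanh_eq_artanh ⟨h0, by linarith⟩]
    exact mul_nonpos_of_nonneg_of_nonpos (by positivity [heven.zpow_nonneg t]) (artanh_nonpos h1)

lemma tendsto_etaFn_nhdsGT_zero {p : ℕ} (hp : 3 ≤ p) : Tendsto (etaFn p) (𝓝[>] 0) atTop := by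
  have hlim : Tendsto (fun t : ℝ => (2 * p : ℝ)⁻¹ * t⁻¹) (𝓝[>] 0) atTop :=
    tendsto_inv_nhdsGT_zero.const_mul_atTop (by positivity)
  refine tendsto_atTop_mono' _ ?_ hlim
  filter_upwards [Ioo_mem_nhdsGT one_pos] with t ⟨h0, h1⟩
  rw [etaFn_of_pos (by omega) h0, le_div_iff₀ (by positivity)]
  have hpow : t ^ (p - 1) ≤ t ^ 2 := pow_le_pow_of_le_one h0.le h1.le (by omega)
  calc (2 * p : ℝ)⁻¹ * t⁻¹ * (p * t ^ (p - 1)) ≤ (2 * p : ℝ)⁻¹ * t⁻¹ * (p * t ^ 2) := by gcongr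
    _ = t / 2 := by field_simp
    _ ≤ arctanh t := (half_lt_arctanh h0 h1).le

lemma tendsto_etaFn_nhdsLT_one {p : ℕ} (hp : p ≠ 0) : Tendsto (etaFn p) (𝓝[<] 1) atTop := by
  have hp0 : (0 : ℝ) < p := by positivity
  refine tendsto_atTop_mono' _ ?_ (tendsto_arctanh_nhdsLT_one.atTop_div_const (r := (p : ℝ)) hp0)
  filter_upwards [Ioo_mem_nhdsLT one_pos] with t ⟨h0, h1⟩
  rw [etaFn_of_pos hp h0]
  have hat : 0 ≤ arctanh t := arctanh_eq_artanh ⟨by linarith, h1.le⟩ ▸ artanh_nonneg h0.le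
  exact div_le_div_of_nonneg_left hat (by positivity)
    (mul_le_of_le_one_right (by positivity) (pow_le_one₀ h0.le h1.le))

noncomputable def etaDerivNum (p : ℕ) (t : ℝ) : ℝ := t / (1 - t ^ 2) - (p - 1) * arctanh t

lemma hasDerivAt_etaFn (p : ℕ) {t : ℝ} (ht : t ≠ 0) (h0 : -1 < t) (h1 : t < 1) :
    HasDerivAt (etaFn p) (etaDerivNum p t / (p * t ^ p)) t := by
  have hEq : (fun s : ℝ => (p : ℝ)⁻¹ * s ^ (1 - (p : ℤ)) * arctanh s) =ᶠ[𝓝 t] etaFn p := by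
    filter_upwards [eventually_ne_nhds ht] with s hs
    rw [etaFn, if_neg hs]
  refine ((((hasDerivAt_zpow _ t (Or.inl ht)).const_mul _).mul
    (hasDerivAt_arctanh h0 h1)).congr_of_eventuallyEq hEq.symm).congr_deriv ?_
  rw [show 1 - (p : ℤ) - 1 = -(p : ℤ) by ring, show 1 - (p : ℤ) = -(p : ℤ) + 1 by ring,
    zpow_add₀ ht, zpow_neg, zpow_natCast, zpow_one]
  have : (1 : ℝ) - t ^ 2 ≠ 0 := by nlinarith
  rw [etaDerivNum]
  field_simp
  push_cast
  ring

lemma hasDerivAt_etaDerivNum (p : ℕ) {t : ℝ} (h0 : -1 < t) (h1 : t < 1) :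
    HasDerivAt (etaDerivNum p) ((p * t ^ 2 - (p - 2)) / (1 - t ^ 2) ^ 2) t := by
  have ht : (1 : ℝ) - t ^ 2 ≠ 0 := by nlinarith
  refine (((hasDerivAt_id t).div ((hasDerivAt_pow 2 t).const_sub 1) ht).sub
    ((hasDerivAt_arctanh h0 h1).const_mul _)).congr_deriv ?_
  simp only [id]
  field_simp
  ring

lemma etaDerivNum_zero (p : ℕ) : etaDerivNum p 0 = 0 := by
  simp [etaDerivNum, arctanh]

lemma continuousOn_etaDerivNum (p : ℕ) {a b : ℝ} (ha : -1 < a) (hb : b < 1) :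
    ContinuousOn (etaDerivNum p) (Icc a b) := fun _ hx =>
  (hasDerivAt_etaDerivNum p (ha.trans_le hx.1) (hx.2.trans_lt hb)).continuousAt.continuousWithinAt

lemma etaDerivNum_neg {p : ℕ} {t : ℝ} (h0 : 0 < t) (h1 : t < 1) (ht : p * t ^ 2 ≤ p - 2) :
    etaDerivNum p t < 0 := by
  have hp : (0 : ℝ) < p := by nlinarith
  have hanti : StrictAntiOn (etaDerivNum p) (Icc 0 t) := by
    refine strictAntiOn_of_deriv_neg (convex_Icc 0 t)
      (continuousOn_etaDerivNum p (by norm_num) h1) fun x hx => ?_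
    rw [interior_Icc] at hx
    have hx1 : 0 < 1 - x ^ 2 := by nlinarith [hx.1, hx.2]
    have hxt : (p : ℝ) * x ^ 2 < p * t ^ 2 := by gcongr; exacts [hx.1.le, hx.2]
    rw [(hasDerivAt_etaDerivNum p (by linarith [hx.1]) (hx.2.trans h1)).deriv]
    exact div_neg_of_neg_of_pos (by linarith) (by positivity)
  simpa [etaDerivNum_zero] using hanti ⟨le_rfl, h0.le⟩ ⟨h0.le, le_rfl⟩ h0

lemma etaDerivNum_pos_of_nonneg {p : ℕ} {u t : ℝ} (hu : 0 < u) (hgu : 0 ≤ etaDerivNum p u)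
    (hut : u < t) (ht : t < 1) : 0 < etaDerivNum p t := by
  have hpu : (p : ℝ) - 2 < p * u ^ 2 := by
    by_contra! h
    exact (etaDerivNum_neg hu (hut.trans ht) h).not_ge hgu
  have hmono : StrictMonoOn (etaDerivNum p) (Icc u t) := by
    refine strictMonoOn_of_deriv_pos (convex_Icc u t)
      (continuousOn_etaDerivNum p (by linarith) ht) fun x hx => ?_
    rw [interior_Icc] at hx
    have hx1 : 0 < 1 - x ^ 2 := by nlinarith [hx.1, hx.2]
    have hux : (p : ℝ) * u ^ 2 ≤ p * x ^ 2 := by gcongr; exact hx.1.le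
    rw [(hasDerivAt_etaDerivNum p (by linarith [hx.1]) (hx.2.trans ht)).deriv]
    exact div_pos (by linarith) (by positivity)
  exact hgu.trans_lt (hmono ⟨le_rfl, hut.le⟩ ⟨hut.le, le_rfl⟩ hut)

lemma continuousOn_etaFn (p : ℕ) {s : Set ℝ} (hs : s ⊆ Ioo 0 1) : ContinuousOn (etaFn p) s :=
  fun _ hx => (hasDerivAt_etaFn p (hs hx).1.ne' (by linarith [(hs hx).1])
    (hs hx).2).continuousAt.continuousWithinAt

lemma strictMonoOn_etaFn {p : ℕ} (hp : p ≠ 0) {u : ℝ} (hu : 0 < u)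
    (hgu : 0 ≤ etaDerivNum p u) : StrictMonoOn (etaFn p) (Ico u 1) := by
  refine strictMonoOn_of_deriv_pos (convex_Ico u 1)
    (continuousOn_etaFn p fun x hx => ⟨hu.trans_le hx.1, hx.2⟩) fun x hx => ?_
  rw [interior_Ico] at hx
  have hx0 : 0 < x := hu.trans hx.1
  rw [(hasDerivAt_etaFn p hx0.ne' (by linarith) hx.2).deriv]
  exact div_pos (etaDerivNum_pos_of_nonneg hu hgu hx.1 hx.2) (by positivity)

lemma strictAntiOn_etaFn_of_lt {p : ℕ} (hp : p ≠ 0) {t m : ℝ} (ht : 0 < t) (htm : t < m)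
    (hm : m < 1) (h : etaFn p m < etaFn p t) : StrictAntiOn (etaFn p) (Ioc 0 t) := by
  have hg : ∀ u ∈ Ioc 0 t, etaDerivNum p u < 0 := fun u hu => by
    by_contra! hgu
    exact h.not_gt (strictMonoOn_etaFn hp hu.1 hgu ⟨hu.2, htm.trans hm⟩
      ⟨hu.2.trans htm.le, hm⟩ htm)
  refine strictAntiOn_of_deriv_neg (convex_Ioc 0 t)
    (continuousOn_etaFn p fun x hx => ⟨hx.1, hx.2.trans_lt (htm.trans hm)⟩) fun x hx => ?_
  rw [interior_Ioc] at hx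
  rw [(hasDerivAt_etaFn p hx.1.ne' (by linarith [hx.1]) (hx.2.trans (htm.trans hm))).deriv]
  exact div_neg_of_neg_of_pos (hg x ⟨hx.1, hx.2.le⟩) (by have := hx.1; positivity)

lemma hasDerivAt_bahH {β : ℝ} {p : ℕ} (hp : p ≠ 0) {x : ℝ} (h0 : 0 < x) (h1 : x < 1) :
    HasDerivAt (bahH β p) (p * x ^ (p - 1) * (β - etaFn p x)) x := by
  refine (((hasDerivAt_pow p x).const_mul β).sub
    (hasDerivAt_bahI (by linarith) h1)).congr_deriv ?_
  rw [etaFn_of_pos hp h0]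
  field_simp

lemma strictAntiOn_bahH {β : ℝ} {p : ℕ} (hp : p ≠ 0) {a b : ℝ} (ha : 0 ≤ a) (hb : b ≤ 1)
    (h : ∀ x ∈ Ioo a b, β < etaFn p x) : StrictAntiOn (bahH β p) (Icc a b) := by
  refine strictAntiOn_of_deriv_neg (convex_Icc a b) (continuous_bahH β p).continuousOn
    fun x hx => ?_
  rw [interior_Icc] at hx
  have hx0 : 0 < x := ha.trans_lt hx.1
  rw [(hasDerivAt_bahH hp hx0 (hx.2.trans_le hb)).deriv]
  exact mul_neg_of_pos_of_neg (by positivity) (sub_neg.2 (h x hx))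

lemma not_isMaxOn_bahH {β : ℝ} {p : ℕ} (hp : p ≠ 0) {b : ℝ} (hb0 : 0 < b) (hb1 : b ≤ 1)
    (h : ∀ᶠ x in 𝓝[<] b, β < etaFn p x) : ¬ IsMaxOn (bahH β p) (Icc (-1) 1) b := by
  obtain ⟨l, hl, hsub⟩ := mem_nhdsLT_iff_exists_Ioo_subset.1 h
  set a := max l 0
  have hab : a < b := max_lt hl hb0
  have hlt := strictAntiOn_bahH hp (le_max_right l 0) hb1
    (fun x hx => hsub ⟨(le_max_left l 0).trans_lt hx.1, hx.2⟩) ⟨le_rfl, hab.le⟩ ⟨hab.le, le_rfl⟩ hab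
  exact fun hmax => (hmax ⟨by linarith [le_max_right l 0], by linarith⟩).not_gt hlt

section maximizer

variable {β : ℝ} {p : ℕ} {m : ℝ}

lemma lt_one_of_isMaxOn_bahH (hp : p ≠ 0) (hm : m ∈ Icc (-1 : ℝ) 1)
    (hmax : IsMaxOn (bahH β p) (Icc (-1) 1) m) : m < 1 := by
  refine hm.2.lt_of_ne ?_
  rintro rfl
  exact not_isMaxOn_bahH hp one_pos le_rfl
    ((tendsto_etaFn_nhdsLT_one hp).eventually_gt_atTop β) hmax

lemma etaFn_eq_of_isMaxOn_bahH (hp : p ≠ 0) (hm0 : 0 < m) (hm1 : m < 1)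
    (hmax : IsMaxOn (bahH β p) (Icc (-1) 1) m) : etaFn p m = β := by
  have hcrit := (hmax.isLocalMax (Icc_mem_nhds (by linarith) hm1)).hasDerivAt_eq_zero
    (hasDerivAt_bahH hp hm0 hm1)
  have : (p : ℝ) * m ^ (p - 1) ≠ 0 := by positivity
  linarith [(mul_eq_zero.1 hcrit).resolve_left this]

lemma etaDerivNum_nonneg_of_isMaxOn_bahH (hp : p ≠ 0) (hm0 : 0 < m) (hm1 : m < 1)
    (hmax : IsMaxOn (bahH β p) (Icc (-1) 1) m) : 0 ≤ etaDerivNum p m := by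
  by_contra! hneg
  have hderiv := (hasDerivAt_etaFn p hm0.ne' (by linarith) hm1).sub_const β
  have hsign := eventually_nhdsWithin_sign_eq_of_deriv_neg (f := fun x => etaFn p x - β)
    (by rw [hderiv.deriv]; exact div_neg_of_neg_of_pos hneg (by positivity))
    (sub_eq_zero.2 (etaFn_eq_of_isMaxOn_bahH hp hm0 hm1 hmax))
  refine not_isMaxOn_bahH hp hm0 hm1.le ?_ hmax
  filter_upwards [nhdsWithin_le_nhds hsign, self_mem_nhdsWithin] with x hx (hxm : x < m)
  rwa [sign_pos (sub_pos.2 hxm), sign_eq_one_iff, sub_pos] at hx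

lemma lt_etaFn_of_isMaxOn_bahH (hp : p ≠ 0) (hm0 : 0 < m) (hm1 : m < 1)
    (hmax : IsMaxOn (bahH β p) (Icc (-1) 1) m) {t : ℝ} (hmt : m < t) (ht : t < 1) :
    β < etaFn p t :=
  etaFn_eq_of_isMaxOn_bahH hp hm0 hm1 hmax ▸ strictMonoOn_etaFn hp hm0
    (etaDerivNum_nonneg_of_isMaxOn_bahH hp hm0 hm1 hmax) ⟨le_rfl, hm1⟩ ⟨hmt.le, ht⟩ hmt

end maximizer

lemma bahH_neg_of_lt_etaFn {β β₀ : ℝ} {p : ℕ} (hp : p ≠ 0) (hβ : β₀ < β) {t m : ℝ} (ht : 0 < t)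
    (htm : t ≤ m) (hm : m < 1) (hηm : etaFn p m = β) (hηt : β < etaFn p t) :
    bahH β₀ p t < 0 := by
  have htm' : t < m := htm.lt_of_ne (by rintro rfl; exact hηt.ne' hηm)
  have hanti := strictAntiOn_etaFn_of_lt hp ht htm' hm (hηm ▸ hηt)
  have hH : bahH β p t < bahH β p 0 := strictAntiOn_bahH hp le_rfl (htm'.trans hm).le
    (fun x hx => hηt.trans (hanti ⟨hx.1, hx.2.le⟩ ⟨ht, le_rfl⟩ hx.2))
    ⟨le_rfl, ht.le⟩ ⟨ht.le, le_rfl⟩ ht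
  rw [bahH_zero β hp] at hH
  have : β₀ * t ^ p < β * t ^ p := by gcongr
  rw [bahH] at hH ⊢
  linarith

lemma lt_etaFn_abs {β : ℝ} (hβ : 0 < β) {p : ℕ} {t : ℝ} (ht : -1 ≤ t) (hη : β < etaFn p t) :
    β < etaFn p |t| ∧ ∀ γ, bahH γ p |t| = bahH γ p t := by
  rcases le_or_gt 0 t with h0 | h0
  · simp [abs_of_nonneg h0, hη]
  rcases Nat.even_or_odd p with hp | hp
  · simp [abs_of_neg h0, etaFn_neg hp, bahH_neg _ hp, hη]
  · exact absurd (etaFn_nonpos hp ht h0.le) (by linarith)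

lemma zero_mem_closure_setOf_lt_etaFn {p : ℕ} (hp : 3 ≤ p) (β : ℝ) :
    (0 : ℝ) ∈ closure {t ∈ Icc (-1 : ℝ) 1 | β < etaFn p t} := by
  refine mem_closure_of_tendsto (b := 𝓝[>] 0) nhdsWithin_le_nhds ?_
  filter_upwards [Ioc_mem_nhdsGT one_pos, (tendsto_etaFn_nhdsGT_zero hp).eventually_gt_atTop β]
    with t ht hη
  exact ⟨⟨by linarith [ht.1], ht.2⟩, hη⟩

lemma le_csSup_image_of_mem_closure {α β : Type*} [TopologicalSpace α]
    [ConditionallyCompleteLattice β] [TopologicalSpace β] [ClosedIicTopology β]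
    {f : α → β} {s : Set α} {x : α}
    (hf : ContinuousWithinAt f s x) (hx : x ∈ closure s) (hb : BddAbove (f '' s)) :
    f x ≤ sSup (f '' s) :=
  closure_minimal (fun _ hy => le_csSup hb hy) isClosed_Iic (hf.mem_closure_image hx)

theorem statement6_general (p : ℕ) (hp : 3 ≤ p) (β β₀ : ℝ) (h1 : β₀ < β)
    (m : ℝ) (hm0 : 0 < m) (hm1 : m ∈ Set.Icc (-1 : ℝ) 1)
    (hmax : IsMaxOn (bahH β p) (Set.Icc (-1 : ℝ) 1) m) :
    sSup (bahH β₀ p '' {t ∈ Set.Icc (-1 : ℝ) 1 | β < etaFn p t})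
      = max (sSup (bahH β₀ p '' Set.Ioc m 1)) 0 := by
  set S := {t ∈ Icc (-1 : ℝ) 1 | β < etaFn p t}
  have hp0 : p ≠ 0 := by omega
  have hm1' : m < 1 := lt_one_of_isMaxOn_bahH hp0 hm1 hmax
  have hηm : etaFn p m = β := etaFn_eq_of_isMaxOn_bahH hp0 hm0 hm1' hmax
  have hβ : 0 < β := hηm ▸ etaFn_pos hp0 hm0 hm1'
  have hIoo : Ioo m 1 ⊆ S := fun t ht => ⟨⟨by linarith [ht.1], ht.2.le⟩,
    lt_etaFn_of_isMaxOn_bahH hp0 hm0 hm1' hmax ht.1 ht.2⟩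
  have hIoc : Ioc m 1 ⊆ Icc (-1) 1 := fun t ht => ⟨by linarith [ht.1], ht.2⟩
  have hbdd : ∀ s ⊆ Icc (-1 : ℝ) 1, BddAbove (bahH β₀ p '' s) := fun s hs =>
    (isCompact_Icc.image (continuous_bahH β₀ p)).bddAbove.mono (image_mono hs)
  have hclosure : ∀ x ∈ closure S, bahH β₀ p x ≤ sSup (bahH β₀ p '' S) := fun _ hx =>
    le_csSup_image_of_mem_closure (continuous_bahH β₀ p).continuousWithinAt hx
      (hbdd S fun _ h => h.1)
  refine le_antisymm (csSup_le ?_ ?_) (max_le (csSup_le ?_ ?_) ?_)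
  · exact (nonempty_Ioo.2 hm1').image _ |>.mono (image_mono hIoo)
  · rintro _ ⟨t, ⟨ht, hηt⟩, rfl⟩
    obtain ⟨hη, habs⟩ := lt_etaFn_abs hβ ht.1 hηt
    have ht0 : 0 < |t| := abs_pos.2 (by rintro rfl; rw [etaFn_zero] at hηt; linarith)
    rw [← habs]
    rcases le_or_gt |t| m with htm | htm
    · exact (bahH_neg_of_lt_etaFn hp0 h1 ht0 htm hm1' hηm hη).le.trans (le_max_right _ _)
    · exact (le_csSup (hbdd _ hIoc) ⟨|t|, ⟨htm, abs_le.2 ht⟩, rfl⟩).trans (le_max_left _ _)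
  · exact (nonempty_Ioc.2 hm1').image _
  · rintro _ ⟨t, ht, rfl⟩
    refine hclosure t (closure_mono hIoo ?_)
    rw [closure_Ioo hm1'.ne]
    exact Ioc_subset_Icc_self ht
  · simpa [bahH_zero β₀ hp0] using hclosure 0 (zero_mem_closure_setOf_lt_etaFn hp β)

/-- For `p ≥ 3` and `β > β₀ > β*(p)`, with `m = m_*(β,p)` the positive global maximizer
of `H_{β,p}` on `[−1,1]`:
`sup_{x ∈ η_p⁻¹((β,∞))} H_{β₀,p}(x) = max { sup_{x ∈ (m, 1]} H_{β₀,p}(x), 0 }`. -/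
theorem statement6 (p : ℕ) (hp : 3 ≤ p) (β β₀ : ℝ) (h0 : betaStar p < β₀) (h1 : β₀ < β)
    (m : ℝ) (hm0 : 0 < m) (hm1 : m ∈ Set.Icc (-1 : ℝ) 1)
    (hmax : IsMaxOn (bahH β p) (Set.Icc (-1 : ℝ) 1) m) :
    sSup (bahH β₀ p '' {t ∈ Set.Icc (-1 : ℝ) 1 | β < etaFn p t})
      = max (sSup (bahH β₀ p '' Set.Ioc m 1)) 0 :=
  statement6_general p hp β β₀ h1 m hm0 hm1 hmax
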